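/- arXiv:1905.05619 — 3 statements merged into one kernel-verified Lean document; each statement's English description precedes it below -/
import Mathlib

section
/- Let R be a commutative ring, A a commutative R-algebra, and B, C commutative A-algebras. Then there is a ring isomorphism (C ⊗_A B) ⊗_R (C ⊗_A B) ≅ (C ⊗_R C) ⊗_{(A ⊗_R A)} (B ⊗_R B), where A ⊗_R A acts on C ⊗_R C and on B ⊗_R B factorwise. -/
open scoped TensorProduct

/-!
Both rings are generated by two copies of `C` and two copies of `B`, with the `i`-th copies of
`C` and `B` glued along the `i`-th copy of `A`, and nothing else identified: on the left the
gluing happens inside each factor `C ⊗[A] B`, on the right the two gluings are performed at once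
over `A ⊗[R] A`. So `(c ⊗ b) ⊗ (c' ⊗ b') ↦ (c ⊗ c') ⊗ (b ⊗ b')` and its reverse are well-defined
ring maps, obtained by lifting pairs of ring maps out of tensor products, and they are inverse on
generators.
-/

namespace Algebra.TensorProduct

variable {A B C T : Type*} [CommSemiring A] [CommSemiring B] [CommSemiring C] [CommSemiring T]
  [Algebra A B] [Algebra A C]

noncomputable def liftRingHom (f : C →+* T) (g : B →+* T)
    (hfg : f.comp (algebraMap A C) = g.comp (algebraMap A B)) : C ⊗[A] B →+* T :=
  letI := (f.comp (algebraMap A C)).toAlgebra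
  (lift (R := A) (S := A) ⟨f, fun _ => rfl⟩ ⟨g, fun a => (RingHom.congr_fun hfg a).symm⟩
    fun _ _ => Commute.all _ _).toRingHom

@[simp]
lemma liftRingHom_tmul (f : C →+* T) (g : B →+* T)
    (hfg : f.comp (algebraMap A C) = g.comp (algebraMap A B)) (c : C) (b : B) :
    liftRingHom f g hfg (c ⊗ₜ b) = f c * g b :=
  rfl

lemma ringHom_ext_tmul_tmul {R S S' P Q P' Q' T : Type*} [CommSemiring R] [CommSemiring S]
    [CommSemiring S'] [Semiring P] [Semiring Q] [Semiring P'] [Semiring Q']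
    [Semiring T] [Algebra S P] [Algebra S Q] [Algebra S' P'] [Algebra S' Q']
    [Algebra R (P ⊗[S] Q)] [Algebra R (P' ⊗[S'] Q')]
    {f g : (P ⊗[S] Q) ⊗[R] (P' ⊗[S'] Q') →+* T}
    (h : ∀ p q p' q', f ((p ⊗ₜ q) ⊗ₜ (p' ⊗ₜ q')) = g ((p ⊗ₜ q) ⊗ₜ (p' ⊗ₜ q'))) : f = g := by
  ext x
  · simpa [← one_def] using h x 1 1 1
  · simpa [← one_def] using h 1 x 1 1
  · simpa [← one_def] using h 1 1 x 1
  · simpa [← one_def] using h 1 1 1 x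

end Algebra.TensorProduct

open Algebra.TensorProduct

namespace TensorExchange

variable (R A : Type*) [CommSemiring R] [CommSemiring A] [Algebra R A]

noncomputable abbrev algebraTensorSelf (D : Type*) [CommSemiring D] [Algebra R D] [Algebra A D]
    [IsScalarTower R A D] : Algebra (A ⊗[R] A) (D ⊗[R] D) :=
  (map (IsScalarTower.toAlgHom R A D) (IsScalarTower.toAlgHom R A D)).toRingHom.toAlgebra

attribute [local instance] algebraTensorSelf

section

variable {R A} (D : Type*) [CommSemiring D] [Algebra R D] [Algebra A D] [IsScalarTower R A D]

lemma includeLeftRingHom_comp_algebraMap_eq :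
    includeLeftRingHom.comp (algebraMap A D) =
      (algebraMap (A ⊗[R] A) (D ⊗[R] D)).comp includeLeftRingHom := by
  ext; simp [RingHom.algebraMap_toAlgebra]

lemma includeRight_comp_algebraMap_eq :
    includeRight.toRingHom.comp (algebraMap A D) =
      (algebraMap (A ⊗[R] A) (D ⊗[R] D)).comp includeRight.toRingHom := by
  ext; simp [RingHom.algebraMap_toAlgebra]

end

variable (B C : Type*) [CommSemiring B] [CommSemiring C]
  [Algebra R B] [Algebra R C] [Algebra A B] [Algebra A C]
  [IsScalarTower R A B] [IsScalarTower R A C]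

noncomputable def hom : (C ⊗[A] B) ⊗[R] (C ⊗[A] B) →+* (C ⊗[R] C) ⊗[A ⊗[R] A] (B ⊗[R] B) :=
  liftRingHom
    (mapRingHom includeLeftRingHom includeLeftRingHom includeLeftRingHom
      (includeLeftRingHom_comp_algebraMap_eq C) (includeLeftRingHom_comp_algebraMap_eq B))
    (mapRingHom includeRight.toRingHom includeRight.toRingHom includeRight.toRingHom
      (includeRight_comp_algebraMap_eq C) (includeRight_comp_algebraMap_eq B))
    (by ext; simp [Algebra.TensorProduct.algebraMap_apply])

@[simp]
lemma hom_tmul (c c' : C) (b b' : B) :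
    hom R A B C ((c ⊗ₜ b) ⊗ₜ (c' ⊗ₜ b')) = (c ⊗ₜ c') ⊗ₜ (b ⊗ₜ b') := by
  simp [hom]

noncomputable def inv : (C ⊗[R] C) ⊗[A ⊗[R] A] (B ⊗[R] B) →+* (C ⊗[A] B) ⊗[R] (C ⊗[A] B) :=
  liftRingHom
    (mapRingHom (RingHom.id R) includeLeftRingHom includeLeftRingHom
      (by ext; simp [Algebra.TensorProduct.algebraMap_apply])
      (by ext; simp [Algebra.TensorProduct.algebraMap_apply]))
    (mapRingHom (RingHom.id R) includeRight.toRingHom includeRight.toRingHom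
      (by ext; simp [Algebra.TensorProduct.algebraMap_apply])
      (by ext; simp [Algebra.TensorProduct.algebraMap_apply]))
    (by ext <;> simp [RingHom.algebraMap_toAlgebra, tmul_one_eq_one_tmul])

@[simp]
lemma inv_tmul (c c' : C) (b b' : B) :
    inv R A B C ((c ⊗ₜ c') ⊗ₜ (b ⊗ₜ b')) = (c ⊗ₜ b) ⊗ₜ (c' ⊗ₜ b') := by
  simp [inv]

noncomputable def equiv : (C ⊗[A] B) ⊗[R] (C ⊗[A] B) ≃+* (C ⊗[R] C) ⊗[A ⊗[R] A] (B ⊗[R] B) :=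
  RingEquiv.ofRingHom (hom R A B C) (inv R A B C)
    (ringHom_ext_tmul_tmul fun _ _ _ _ => by simp)
    (ringHom_ext_tmul_tmul fun _ _ _ _ => by simp)

end TensorExchange

/-- For a commutative `R`-algebra `A` and commutative `A`-algebras `B, C` (with
compatible `R`-structures), there is a ring isomorphism
`(C ⊗_A B) ⊗_R (C ⊗_A B) ≅ (C ⊗_R C) ⊗_{A ⊗_R A} (B ⊗_R B)`, where `A ⊗_R A` acts on
`C ⊗_R C` and on `B ⊗_R B` factorwise. -/
theorem stmt5 (R A B C : Type) [CommRing R] [CommRing A] [CommRing B] [CommRing C]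
    [Algebra R A] [Algebra R B] [Algebra R C] [Algebra A B] [Algebra A C]
    [IsScalarTower R A B] [IsScalarTower R A C] :
    letI : Algebra (A ⊗[R] A) (C ⊗[R] C) :=
      (Algebra.TensorProduct.map (IsScalarTower.toAlgHom R A C)
        (IsScalarTower.toAlgHom R A C)).toRingHom.toAlgebra
    letI : Algebra (A ⊗[R] A) (B ⊗[R] B) :=
      (Algebra.TensorProduct.map (IsScalarTower.toAlgHom R A B)
        (IsScalarTower.toAlgHom R A B)).toRingHom.toAlgebra
    Nonempty (((C ⊗[A] B) ⊗[R] (C ⊗[A] B)) ≃+* ((C ⊗[R] C) ⊗[A ⊗[R] A] (B ⊗[R] B))) :=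
  ⟨TensorExchange.equiv R A B C⟩
end

section
/- Let k be a field of odd characteristic p and consider the chain complex computing Hochschild-style degree-2 classes: in the ℤ-graded k-vector space spanned in bidegree (1,1) by the five matrices M₁ = [[1,t],[t,t]], M₂ = [[1,t],[t,1]], M₃ = [[1,t],[1,t]], M₄ = [[1,1],[t,t]], M₅ = [[1,1],[1,t]] inside the bicomplex for the Loday construction of 𝔽_p[t]/t² over 𝔽_p with 𝔽_p coefficients on the torus S¹ × S¹, the homology in total degree 2 has dimension at most 3 over 𝔽_p. -/
set_option maxSynthPendingDepth 5
set_option synthInstance.maxHeartbeats 1000000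
set_option maxHeartbeats 1000000

noncomputable section

namespace LodayTorus

/-!  An explicit model of the bicomplex computing the Loday construction
`𝓛^{𝔽_p}_{S¹ × S¹}(𝔽_p[t]/t²; 𝔽_p)`.  In bidegree `(n, m)` the entry is
`(𝔽_p[t]/t²)^{⊗ (n+1)(m+1)-1}` (a copy of `𝔽_p[t]/t²` at each simplex of
`S¹_n × S¹_m` except the basepoint `(0,0)`, which carries the coefficients `𝔽_p`).
Using the basis `{1, t}` of `𝔽_p[t]/t²`, this tensor power is the free module on
Bool-valued matrices (`true` = `t`, `false` = `1`) vanishing at the basepoint.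
The horizontal/vertical face maps are the Hochschild-type face maps multiplying
adjacent columns/rows entrywise (`t·t = 0`, and `t` acts as `0` on the coefficient
copy of `𝔽_p` at the basepoint). -/

/-- Basis of the bidegree-`(n,m)` entry of the bicomplex: matrices of `1`s (`false`) and
`t`s (`true`) indexed by `[n] × [m]`, with entry `1` at the basepoint `(0,0)`. -/
abbrev LBasis (n m : ℕ) : Type :=
  {f : Fin (n + 1) × Fin (m + 1) → Bool // f (0, 0) = false}

/-- The bidegree-`(n,m)` entry of the bicomplex: the free `k`-module on `LBasis n m`,
i.e. `(k[t]/t²)^{⊗ (n+1)(m+1)-1}` with coefficients `k` at the basepoint. -/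
abbrev LMod (k : Type) [Field k] (n m : ℕ) : Type := LBasis n m →₀ k

/-- The pair of columns multiplied together by the `i`-th horizontal face map
(the last face map wraps around, multiplying the last column into column `0`). -/
def hcols (n : ℕ) (i : Fin (n + 2)) : Fin (n + 2) × Fin (n + 2) :=
  if h : (i : ℕ) < n + 1 then (⟨(i : ℕ), by omega⟩, ⟨(i : ℕ) + 1, by omega⟩)
  else (⟨0, by omega⟩, ⟨n + 1, by omega⟩)

/-- The matrix obtained by applying the `i`-th horizontal (Hochschild-type) face map to the
basis matrix `f`: the two columns `hcols n i` are multiplied entrywise (`||` on the `{1,t}`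
pattern) and the remaining columns shift accordingly. -/
def hpattern (n m : ℕ) (i : Fin (n + 2)) (f : Fin (n + 2) × Fin (m + 1) → Bool)
    (c : Fin (n + 1)) (j : Fin (m + 1)) : Bool :=
  if h : (i : ℕ) < n + 1 then
    if (c : ℕ) < (i : ℕ) then f (⟨(c : ℕ), by omega⟩, j)
    else if (c : ℕ) = (i : ℕ) then
      f (⟨(i : ℕ), by omega⟩, j) || f (⟨(i : ℕ) + 1, by omega⟩, j)
    else f (⟨(c : ℕ) + 1, by omega⟩, j)
  else
    if (c : ℕ) = 0 then f (⟨0, by omega⟩, j) || f (⟨n + 1, by omega⟩, j)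
    else f (⟨(c : ℕ), by omega⟩, j)

variable (k : Type) [Field k]

/-- The `i`-th horizontal face map of the bicomplex.  A basis matrix is sent to the merged
matrix, or to `0` if two `t`s are multiplied (`t² = 0`) or a `t` lands on the basepoint
(where the coefficient is `k` via the augmentation `t ↦ 0`). -/
def faceH (n m : ℕ) (i : Fin (n + 2)) : LMod k (n + 1) m →ₗ[k] LMod k n m :=
  Finsupp.lift (LMod k n m) k (LBasis (n + 1) m) fun f =>
    if (∃ j, f.1 ((hcols n i).1, j) = true ∧ f.1 ((hcols n i).2, j) = true)
        ∨ hpattern n m i f.1 0 0 = true then 0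
    else Finsupp.single
      ⟨fun cj => if cj = ((0 : Fin (n + 1)), (0 : Fin (m + 1))) then false
        else hpattern n m i f.1 cj.1 cj.2, by simp⟩ 1

/-- Transposition of matrices, identifying the `(n,m)` and `(m,n)` entries. -/
def transB (n m : ℕ) : LBasis n m ≃ LBasis m n where
  toFun f := ⟨fun cj => f.1 (cj.2, cj.1), f.2⟩
  invFun f := ⟨fun cj => f.1 (cj.2, cj.1), f.2⟩
  left_inv _ := rfl
  right_inv _ := rfl

/-- Transposition as a linear equivalence of the entries of the bicomplex. -/
def transL (n m : ℕ) : LMod k n m ≃ₗ[k] LMod k m n :=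
  Finsupp.domLCongr (transB n m)

/-- The `j`-th vertical face map (the horizontal one, conjugated by transposition). -/
def faceV (n m : ℕ) (j : Fin (m + 2)) : LMod k n (m + 1) →ₗ[k] LMod k n m :=
  (transL k m n).toLinearMap ∘ₗ faceH k m n j ∘ₗ (transL k n (m + 1)).toLinearMap

/-- The horizontal differential: alternating sum of the horizontal face maps. -/
def dH (n m : ℕ) : LMod k (n + 1) m →ₗ[k] LMod k n m :=
  ∑ i : Fin (n + 2), ((-1 : k) ^ (i : ℕ)) • faceH k n m i

/-- The vertical differential: alternating sum of the vertical face maps. -/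
def dV (n m : ℕ) : LMod k n (m + 1) →ₗ[k] LMod k n m :=
  ∑ j : Fin (m + 2), ((-1 : k) ^ (j : ℕ)) • faceV k n m j

/-- The total differential from total degree 2 to total degree 1. -/
def d21 : (LMod k 0 2 × LMod k 1 1 × LMod k 2 0) →ₗ[k] (LMod k 0 1 × LMod k 1 0) :=
  LinearMap.prod
    (dV k 0 1 ∘ₗ LinearMap.fst k (LMod k 0 2) (LMod k 1 1 × LMod k 2 0)
      + dH k 0 1 ∘ₗ (LinearMap.fst k (LMod k 1 1) (LMod k 2 0) ∘ₗ
          LinearMap.snd k (LMod k 0 2) (LMod k 1 1 × LMod k 2 0)))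
    (dH k 1 0 ∘ₗ (LinearMap.snd k (LMod k 1 1) (LMod k 2 0) ∘ₗ
          LinearMap.snd k (LMod k 0 2) (LMod k 1 1 × LMod k 2 0))
      - dV k 1 0 ∘ₗ (LinearMap.fst k (LMod k 1 1) (LMod k 2 0) ∘ₗ
          LinearMap.snd k (LMod k 0 2) (LMod k 1 1 × LMod k 2 0)))

/-- The total differential from total degree 3 to total degree 2. -/
def d32 :
    (LMod k 0 3 × LMod k 1 2 × LMod k 2 1 × LMod k 3 0) →ₗ[k]
      (LMod k 0 2 × LMod k 1 1 × LMod k 2 0) :=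
  LinearMap.prod
    (dV k 0 2 ∘ₗ LinearMap.fst k (LMod k 0 3) (LMod k 1 2 × LMod k 2 1 × LMod k 3 0)
      + dH k 0 2 ∘ₗ (LinearMap.fst k (LMod k 1 2) (LMod k 2 1 × LMod k 3 0) ∘ₗ
          LinearMap.snd k (LMod k 0 3) (LMod k 1 2 × LMod k 2 1 × LMod k 3 0)))
    (LinearMap.prod
      (dH k 1 1 ∘ₗ (LinearMap.fst k (LMod k 2 1) (LMod k 3 0) ∘ₗ
          LinearMap.snd k (LMod k 1 2) (LMod k 2 1 × LMod k 3 0) ∘ₗ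
          LinearMap.snd k (LMod k 0 3) (LMod k 1 2 × LMod k 2 1 × LMod k 3 0))
        - dV k 1 1 ∘ₗ (LinearMap.fst k (LMod k 1 2) (LMod k 2 1 × LMod k 3 0) ∘ₗ
            LinearMap.snd k (LMod k 0 3) (LMod k 1 2 × LMod k 2 1 × LMod k 3 0)))
      (dH k 2 0 ∘ₗ (LinearMap.snd k (LMod k 2 1) (LMod k 3 0) ∘ₗ
          LinearMap.snd k (LMod k 1 2) (LMod k 2 1 × LMod k 3 0) ∘ₗ
          LinearMap.snd k (LMod k 0 3) (LMod k 1 2 × LMod k 2 1 × LMod k 3 0))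
        + dV k 2 0 ∘ₗ (LinearMap.fst k (LMod k 2 1) (LMod k 3 0) ∘ₗ
            LinearMap.snd k (LMod k 1 2) (LMod k 2 1 × LMod k 3 0) ∘ₗ
            LinearMap.snd k (LMod k 0 3) (LMod k 1 2 × LMod k 2 1 × LMod k 3 0))))

/-- The homology of the total complex of the bicomplex in total degree 2. -/
abbrev H2 : Type :=
  LinearMap.ker (d21 k) ⧸
    Submodule.comap (LinearMap.ker (d21 k)).subtype (LinearMap.range (d32 k))

end LodayTorus

/-!
In the bases of tensors of `1`s and `t`s the total differentials are integer matrices, so every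
fact needed about them is a finite integer computation. Of the 16 basis tensors of total degree 2,
eleven (among them `M₁, …, M₄`) are cycles, and twice each of them is the boundary of an integral
chain; as 2 is invertible, the boundaries have dimension at least 11. The differential maps the
all-ones tensors in bidegrees `(0,2)` and `(2,0)` to distinct basis vectors, so the cycles have
dimension at most `16 - 2 = 14`, and the homology at most `14 - 11 = 3`.
-/

theorem Module.finrank_homology_add_card_add_card_le {K U V W ι κ : Type*} [Field K]
    [AddCommGroup U] [Module K U] [AddCommGroup V] [Module K V] [AddCommGroup W] [Module K W]
    [FiniteDimensional K V] [Fintype ι] [Fintype κ] (e : U →ₗ[K] V) (d : V →ₗ[K] W)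
    (x : ι → V) (hx : LinearIndependent K x) (hxe : ∀ i, x i ∈ LinearMap.range e)
    (hxd : ∀ i, d (x i) = 0) (y : κ → V) (hy : LinearIndependent K (d ∘ y)) :
    Module.finrank K (LinearMap.ker d ⧸ (LinearMap.range e).comap (LinearMap.ker d).subtype)
      + Fintype.card ι + Fintype.card κ ≤ Module.finrank K V := by
  set N := (LinearMap.range e).comap (LinearMap.ker d).subtype
  have hN : Fintype.card ι ≤ Module.finrank K N := by
    let x' : ι → N := fun i => ⟨⟨x i, hxd i⟩, hxe i⟩
    exact (LinearIndependent.of_comp ((LinearMap.ker d).subtype ∘ₗ N.subtype) (v := x') hx)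
      |>.fintype_card_le_finrank
  have hrange : Fintype.card κ ≤ Module.finrank K (LinearMap.range d) := by
    let y' : κ → LinearMap.range d := fun j => ⟨d (y j), LinearMap.mem_range_self d (y j)⟩
    exact (LinearIndependent.of_comp (LinearMap.range d).subtype (v := y') hy)
      |>.fintype_card_le_finrank
  have hquot := Submodule.finrank_quotient_add_finrank N
  have hrank := LinearMap.finrank_range_add_finrank_ker d
  omega

open Matrix in
theorem LinearMap.map_sum_intCast_smul_of_toMatrix_eq {R M N ι κ : Type*} [CommRing R]
    [AddCommGroup M] [Module R M] [AddCommGroup N] [Module R N] [Fintype ι] [Fintype κ]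
    [DecidableEq ι] (b : Module.Basis ι R M) (c : Module.Basis κ R N) (L : M →ₗ[R] N)
    (A : Matrix κ ι ℤ) (hA : LinearMap.toMatrix b c L = A.map (Int.cast)) (w : ι → ℤ) :
    L (∑ i, (w i : R) • b i) = ∑ j, ((A *ᵥ w) j : R) • c j := by
  rw [← Matrix.toLin_toMatrix b c L, hA, Matrix.toLin_apply, b.repr_sum_self]
  congr! with j
  exact ((Int.castRingHom R).map_mulVec A w j).symm

namespace LodayTorus

open Matrix

-- Without this shortcut, synthesis for the nested sums below exceeds `synthInstance.maxSize`.
instance (n m : ℕ) : DecidableEq (LBasis n m) := inferInstanceAs (DecidableEq (Subtype _))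

-- Core's derived instance transports along `a = b` with `▸`, which `decide` cannot reduce
-- when `a` and `b` are equal functions that are not definitionally equal.
instance {α β : Type*} [DecidableEq α] [DecidableEq β] : DecidableEq (α ⊕ β)
  | .inl a, .inl b => decidable_of_iff' (a = b) Sum.inl_injective.eq_iff
  | .inr a, .inr b => decidable_of_iff' (a = b) Sum.inr_injective.eq_iff
  | .inl _, .inr _ => isFalse Sum.inl_ne_inr
  | .inr _, .inl _ => isFalse Sum.inr_ne_inl

def faceMat (n m : ℕ) (i : Fin (n + 2)) : Matrix (LBasis n m) (LBasis (n + 1) m) ℤ :=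
  Matrix.of fun g f =>
    if (∃ j, f.1 ((hcols n i).1, j) = true ∧ f.1 ((hcols n i).2, j) = true)
        ∨ hpattern n m i f.1 0 0 = true then 0
    else if ⟨fun cj => if cj = ((0 : Fin (n + 1)), (0 : Fin (m + 1))) then false
        else hpattern n m i f.1 cj.1 cj.2, by simp⟩ = g then 1
    else 0

def dHMat (n m : ℕ) : Matrix (LBasis n m) (LBasis (n + 1) m) ℤ :=
  ∑ i : Fin (n + 2), (-1 : ℤ) ^ (i : ℕ) • faceMat n m i

def dVMat (n m : ℕ) : Matrix (LBasis n m) (LBasis n (m + 1)) ℤ :=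
  (dHMat m n).submatrix (transB n m) (transB n (m + 1))

abbrev TotIdx1 : Type := LBasis 0 1 ⊕ LBasis 1 0

abbrev TotIdx2 : Type := LBasis 0 2 ⊕ LBasis 1 1 ⊕ LBasis 2 0

abbrev TotIdx3 : Type := LBasis 0 3 ⊕ LBasis 1 2 ⊕ LBasis 2 1 ⊕ LBasis 3 0

def d21Mat : Matrix TotIdx1 TotIdx2 ℤ :=
  fromBlocks (dVMat 0 1) (fromCols (dHMat 0 1) 0) 0 (fromCols (-dVMat 1 0) (dHMat 1 0))

def d32Mat : Matrix TotIdx2 TotIdx3 ℤ :=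
  fromBlocks (dVMat 0 2) (fromCols (dHMat 0 2) 0) 0
    (fromBlocks (-dVMat 1 1) (fromCols (dHMat 1 1) 0) 0 (fromCols (dVMat 2 0) (dHMat 2 0)))

-- The basis tensor whose factor at `(i, j)` is `t ^ A i j`.
def monomial {n m : ℕ} (A : Matrix (Fin (n + 1)) (Fin (m + 1)) (Fin 2))
    (h : A 0 0 = 0 := by decide) : LBasis n m :=
  ⟨fun cj => A cj.1 cj.2 = 1, by simp [h]⟩

-- Not `Pi.single`, whose dependent `Function.update` blocks `decide` in the same way.
def basisVec {ι : Type*} [DecidableEq ι] (a : ι) (c : ℤ) : ι → ℤ :=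
  fun x => if x = a then c else 0

theorem sum_basisVec_smul {R M ι : Type*} [Ring R] [AddCommGroup M] [Module R M] [Fintype ι]
    [DecidableEq ι] (b : ι → M) (a : ι) (c : ℤ) :
    ∑ i, ((basisVec a c i : ℤ) : R) • b i = (c : R) • b a := by
  simp [basisVec]

def boundaryIdx : Fin 11 → TotIdx2 :=
  ![.inl (monomial !![0, 0, 1]), .inl (monomial !![0, 1, 0]),
    .inr (.inl (monomial !![0, 0; 0, 0])), .inr (.inl (monomial !![0, 0; 1, 0])),
    .inr (.inl (monomial !![0, 1; 0, 0])), .inr (.inl (monomial !![0, 1; 1, 1])),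
    .inr (.inl (monomial !![0, 1; 1, 0])), .inr (.inl (monomial !![0, 1; 0, 1])),
    .inr (.inl (monomial !![0, 0; 1, 1])),
    .inr (.inr (monomial !![0; 0; 1])), .inr (.inr (monomial !![0; 1; 0]))]

-- `M₂` has no single-tensor preimage: the boundary of `[[1,1,t],[1,t,1]]` is `M₃ - M₂`.
def boundaryPreimage : Fin 11 → TotIdx3 → ℤ :=
  ![basisVec (.inl (monomial !![0, 0, 0, 1])) 2,
    basisVec (.inl (monomial !![0, 1, 0, 0])) (-2),
    basisVec (.inr (.inl (monomial !![0, 0, 0; 0, 0, 0]))) (-2),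
    basisVec (.inr (.inl (monomial !![0, 0, 0; 0, 0, 1]))) (-2),
    basisVec (.inr (.inr (.inl (monomial !![0, 0; 0, 0; 0, 1])))) 2,
    basisVec (.inr (.inl (monomial !![0, 0, 1; 0, 1, 1]))) (-2),
    basisVec (.inr (.inr (.inl (monomial !![0, 0; 0, 1; 0, 1])))) 1
      - basisVec (.inr (.inl (monomial !![0, 0, 1; 0, 1, 0]))) 2,
    basisVec (.inr (.inr (.inl (monomial !![0, 0; 0, 1; 0, 1])))) 1,
    basisVec (.inr (.inl (monomial !![0, 0, 0; 0, 1, 1]))) (-1),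
    basisVec (.inr (.inr (.inr (monomial !![0; 0; 0; 1])))) 2,
    basisVec (.inr (.inr (.inr (monomial !![0; 1; 0; 0])))) (-2)]

def onesIdx : Fin 2 → TotIdx2 := ![.inl (monomial 0), .inr (.inr (monomial 0))]

def onesImage : Fin 2 → TotIdx1 := ![.inl (monomial 0), .inr (monomial 0)]

theorem d32Mat_mulVec_boundaryPreimage (i : Fin 11) :
    d32Mat *ᵥ boundaryPreimage i = basisVec (boundaryIdx i) 2 := by
  revert i; decide +kernel

theorem d21Mat_mulVec_boundaryIdx (i : Fin 11) : d21Mat *ᵥ basisVec (boundaryIdx i) 1 = 0 := by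
  revert i; decide +kernel

theorem d21Mat_mulVec_onesIdx (j : Fin 2) :
    d21Mat *ᵥ basisVec (onesIdx j) 1 = basisVec (onesImage j) 1 := by
  revert j; decide +kernel

section

variable (k : Type) [Field k]

theorem faceH_single_one_apply (n m : ℕ) (i : Fin (n + 2)) (f : LBasis (n + 1) m)
    (g : LBasis n m) : faceH k n m i (Finsupp.single f 1) g = (faceMat n m i g f : k) := by
  rw [faceH, Finsupp.lift_apply, Finsupp.sum_single_index (by simp), one_smul, faceMat,
    Matrix.of_apply]
  split_ifs with hzero himg
  · simp
  · rw [Finsupp.single_apply, if_pos himg, Int.cast_one]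
  · rw [Finsupp.single_apply, if_neg himg, Int.cast_zero]

theorem dH_single_one_apply (n m : ℕ) (f : LBasis (n + 1) m) (g : LBasis n m) :
    dH k n m (Finsupp.single f 1) g = (dHMat n m g f : k) := by
  simp [dH, dHMat, Matrix.sum_apply, faceH_single_one_apply]

theorem dV_single_one_apply (n m : ℕ) (f : LBasis n (m + 1)) (g : LBasis n m) :
    dV k n m (Finsupp.single f 1) g = (dVMat n m g f : k) := by
  simp [dV, dVMat, faceV, transL, Matrix.sum_apply, faceH_single_one_apply, dHMat]
  rfl

def totBasis1 : Module.Basis TotIdx1 k (LMod k 0 1 × LMod k 1 0) :=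
  Finsupp.basisSingleOne.prod Finsupp.basisSingleOne

def totBasis2 : Module.Basis TotIdx2 k (LMod k 0 2 × LMod k 1 1 × LMod k 2 0) :=
  Finsupp.basisSingleOne.prod (Finsupp.basisSingleOne.prod Finsupp.basisSingleOne)

def totBasis3 :
    Module.Basis TotIdx3 k (LMod k 0 3 × LMod k 1 2 × LMod k 2 1 × LMod k 3 0) :=
  Finsupp.basisSingleOne.prod
    (Finsupp.basisSingleOne.prod (Finsupp.basisSingleOne.prod Finsupp.basisSingleOne))

theorem toMatrix_d21 :
    LinearMap.toMatrix (totBasis2 k) (totBasis1 k) (d21 k) = d21Mat.map (Int.cast) := by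
  ext (g | g) (f | f | f) <;>
    simp [LinearMap.toMatrix_apply, totBasis1, totBasis2, d21, d21Mat,
      dH_single_one_apply, dV_single_one_apply]

theorem toMatrix_d32 :
    LinearMap.toMatrix (totBasis3 k) (totBasis2 k) (d32 k) = d32Mat.map (Int.cast) := by
  ext (g | g | g) (f | f | f | f) <;>
    simp [LinearMap.toMatrix_apply, totBasis3, totBasis2, d32, d32Mat,
      dH_single_one_apply, dV_single_one_apply]

theorem d21_totBasis2 (s : TotIdx2) :
    d21 k (totBasis2 k s) = ∑ j, ((d21Mat *ᵥ basisVec s 1) j : k) • totBasis1 k j := by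
  rw [← LinearMap.map_sum_intCast_smul_of_toMatrix_eq _ _ _ _ (toMatrix_d21 k),
    sum_basisVec_smul, Int.cast_one, one_smul]

theorem d21_totBasis2_boundaryIdx (i : Fin 11) : d21 k (totBasis2 k (boundaryIdx i)) = 0 := by
  simp [d21_totBasis2, d21Mat_mulVec_boundaryIdx]

theorem d21_totBasis2_onesIdx (j : Fin 2) :
    d21 k (totBasis2 k (onesIdx j)) = totBasis1 k (onesImage j) := by
  rw [d21_totBasis2, d21Mat_mulVec_onesIdx, sum_basisVec_smul, Int.cast_one, one_smul]

theorem totBasis2_boundaryIdx_mem_range (h2 : (2 : k) ≠ 0) (i : Fin 11) :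
    totBasis2 k (boundaryIdx i) ∈ LinearMap.range (d32 k) := by
  have hbd := LinearMap.map_sum_intCast_smul_of_toMatrix_eq _ _ _ _ (toMatrix_d32 k)
    (boundaryPreimage i)
  rw [d32Mat_mulVec_boundaryPreimage, sum_basisVec_smul, Int.cast_ofNat] at hbd
  exact (Submodule.smul_mem_iff _ h2).mp ⟨_, hbd⟩

theorem finrank_H2_le_three (h2 : (2 : k) ≠ 0) : Module.finrank k (H2 k) ≤ 3 := by
  have hd21_ones : d21 k ∘ totBasis2 k ∘ onesIdx = totBasis1 k ∘ onesImage :=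
    funext (d21_totBasis2_onesIdx k)
  have hbound := Module.finrank_homology_add_card_add_card_le (d32 k) (d21 k)
    (totBasis2 k ∘ boundaryIdx) ((totBasis2 k).linearIndependent.comp _ (by decide))
    (totBasis2_boundaryIdx_mem_range k h2) (d21_totBasis2_boundaryIdx k)
    (totBasis2 k ∘ onesIdx)
    (hd21_ones ▸ (totBasis1 k).linearIndependent.comp _ (by decide))
  have hcard : Fintype.card TotIdx2 = 16 := by decide
  rw [Module.finrank_eq_card_basis (totBasis2 k), hcard, Fintype.card_fin,
    Fintype.card_fin] at hbound
  unfold H2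
  omega

end

end LodayTorus

/-- for an odd prime `p`, in the bicomplex for the Loday construction of
`𝔽_p[t]/t²` over `𝔽_p` with `𝔽_p`-coefficients on the torus `S¹ × S¹` (whose bidegree-`(1,1)`
cycles include the five matrices `[[1,t],[t,t]]`, `[[1,t],[t,1]]`, `[[1,t],[1,t]]`,
`[[1,1],[t,t]]`, `[[1,1],[1,t]]`), the homology in total degree 2 is at most 3-dimensional
over `𝔽_p`. -/
theorem stmt12 (p : ℕ) [Fact p.Prime] (hodd : Odd p) :
    Module.finrank (ZMod p) (LodayTorus.H2 (ZMod p)) ≤ 3 := by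
  refine LodayTorus.finrank_H2_le_three (ZMod p) (Ring.two_ne_zero ?_)
  rw [ZMod.ringChar_zmod_n]
  rintro rfl
  exact Nat.not_odd_iff_even.mpr even_two hodd
end
end

section
/- Let R be a commutative ring and let A, B be commutative R-algebras such that A ⊗_R B = 0. Then for every n ≥ 1 there is a ring isomorphism (A × B)^{⊗_R n} ≅ A^{⊗_R n} × B^{⊗_R n}. -/
open scoped TensorProduct
open PiTensorProduct

section Aux

variable (R A B : Type) [CommRing R] [CommRing A] [CommRing B]
    [Algebra R A] [Algebra R B] (n : ℕ)

/-- forward multilinear map -/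
noncomputable def fwdML : MultilinearMap R (fun _ : Fin n => A × B)
    ((⨂[R] _ : Fin n, A) × (⨂[R] _ : Fin n, B)) :=
  ((PiTensorProduct.tprod R).compLinearMap (fun _ => LinearMap.fst R A B)).prod
    ((PiTensorProduct.tprod R).compLinearMap (fun _ => LinearMap.snd R A B))

@[simp] lemma fwdML_apply (x : Fin n → A × B) :
    fwdML R A B n x = (PiTensorProduct.tprod R (fun i => (x i).1), PiTensorProduct.tprod R (fun i => (x i).2)) := rfl

/-- forward algebra hom -/
noncomputable def fwd : (⨂[R] _ : Fin n, (A × B)) →ₐ[R]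
    ((⨂[R] _ : Fin n, A) × (⨂[R] _ : Fin n, B)) :=
  liftAlgHom (fwdML R A B n)
    (by simp [Prod.ext_iff]; exact ⟨rfl, rfl⟩)
    (fun x y => by
      simp only [fwdML_apply, Prod.mk_mul_mk, Prod.ext_iff]
      constructor
      · exact map_mul (tprodMonoidHom R) (fun i => (x i).1) (fun i => (y i).1)
      · exact map_mul (tprodMonoidHom R) (fun i => (x i).2) (fun i => (y i).2))

noncomputable def bwdA : (⨂[R] _ : Fin n, A) →ₗ[R] (⨂[R] _ : Fin n, (A × B)) :=
  PiTensorProduct.lift ((PiTensorProduct.tprod R).compLinearMap (fun _ => LinearMap.inl R A B))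

noncomputable def bwdB : (⨂[R] _ : Fin n, B) →ₗ[R] (⨂[R] _ : Fin n, (A × B)) :=
  PiTensorProduct.lift ((PiTensorProduct.tprod R).compLinearMap (fun _ => LinearMap.inr R A B))

@[simp] lemma bwdA_tprod (a : Fin n → A) :
    bwdA R A B n (PiTensorProduct.tprod R a) = PiTensorProduct.tprod R (fun i => ((a i, 0) : A × B)) := by
  simp [bwdA]

@[simp] lemma bwdB_tprod (b : Fin n → B) :
    bwdB R A B n (PiTensorProduct.tprod R b) = PiTensorProduct.tprod R (fun i => ((0, b i) : A × B)) := by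
  simp [bwdB]

variable {R A B n}

/-- the key bilinear map -/
noncomputable def keyBil (j k : Fin n) (hjk : j ≠ k) :
    A →ₗ[R] B →ₗ[R] (⨂[R] _ : Fin n, (A × B)) :=
  LinearMap.mk₂ R
    (fun a b => PiTensorProduct.tprod R
      (Function.update (Function.update (1 : Fin n → A × B) j ((a, 0) : A × B)) k ((0, b) : A × B)))
    (fun a a' b => by
      show PiTensorProduct.tprod R _ = PiTensorProduct.tprod R _ + PiTensorProduct.tprod R _
      rw [Function.update_comm hjk, Function.update_comm hjk, Function.update_comm hjk]
      have : ((a + a', 0) : A × B) = (a, 0) + (a', 0) := by simp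
      rw [this, MultilinearMap.map_update_add])
    (fun r a b => by
      show PiTensorProduct.tprod R _ = r • PiTensorProduct.tprod R _
      rw [Function.update_comm hjk, Function.update_comm hjk]
      have : ((r • a, 0) : A × B) = r • ((a, 0) : A × B) := by simp
      rw [this, MultilinearMap.map_update_smul])
    (fun a b b' => by
      show PiTensorProduct.tprod R _ = PiTensorProduct.tprod R _ + PiTensorProduct.tprod R _
      have : ((0, b + b') : A × B) = (0, b) + (0, b') := by simp
      rw [this, MultilinearMap.map_update_add])
    (fun r a b => by
      show PiTensorProduct.tprod R _ = r • PiTensorProduct.tprod R _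
      have : ((0, r • b) : A × B) = r • ((0, b) : A × B) := by simp
      rw [this, MultilinearMap.map_update_smul])

lemma mixed_unit_zero (h : Subsingleton (A ⊗[R] B)) (j k : Fin n) (hjk : j ≠ k) :
    PiTensorProduct.tprod R (Function.update (Function.update (1 : Fin n → A × B) j ((1, 0) : A × B))
      k ((0, 1) : A × B)) = 0 := by
  have h1 : ((1 : A) ⊗ₜ[R] (1 : B)) = (0 : A ⊗[R] B) := Subsingleton.elim _ _
  have := congrArg (TensorProduct.lift (keyBil j k hjk)) h1
  simpa [keyBil] using this

lemma mixed_zero (h : Subsingleton (A ⊗[R] B)) (x : Fin n → A × B)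
    (j k : Fin n) (hjk : j ≠ k) (hj : (x j).2 = 0) (hk : (x k).1 = 0) :
    PiTensorProduct.tprod R x = 0 := by
  have key : x = x * (Function.update (Function.update (1 : Fin n → A × B) j ((1, 0) : A × B))
      k ((0, 1) : A × B)) := by
    funext i
    rcases eq_or_ne i k with rfl | hik
    · simp [Function.update_self, Prod.ext_iff, hk]
    · rcases eq_or_ne i j with rfl | hij
      · simp [Function.update_of_ne hjk, Function.update_self, Prod.ext_iff, hj]
      · simp [Function.update_of_ne hik, Function.update_of_ne hij]
  calc PiTensorProduct.tprod R x = PiTensorProduct.tprod R (x * _) := by rw [← key]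
    _ = PiTensorProduct.tprod R x * PiTensorProduct.tprod R (Function.update (Function.update (1 : Fin n → A × B) j
          ((1, 0) : A × B)) k ((0, 1) : A × B)) := map_mul (tprodMonoidHom R) _ _
    _ = 0 := by rw [mixed_unit_zero h j k hjk, mul_zero]

lemma split (h : Subsingleton (A ⊗[R] B)) (hn : 1 ≤ n) (x : Fin n → A × B) :
    PiTensorProduct.tprod R x = PiTensorProduct.tprod R (fun i => (((x i).1, 0) : A × B))
      + PiTensorProduct.tprod R (fun i => ((0, (x i).2) : A × B)) := by
  have hx : x = (fun i => (((x i).1, 0) : A × B)) + (fun i => ((0, (x i).2) : A × B)) := by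
    funext i; simp
  rw [hx, MultilinearMap.map_add_univ]
  rw [Finset.sum_eq_add_of_mem (Finset.univ : Finset (Fin n)) (∅ : Finset (Fin n))
    (Finset.mem_univ _) (Finset.mem_univ _)
    (by
      haveI : Nonempty (Fin n) := ⟨⟨0, by omega⟩⟩
      exact Finset.univ_nonempty.ne_empty)
    (by
      intro s _ hs
      obtain ⟨j, hj⟩ : ∃ j, j ∈ s := by
        by_contra hc
        push_neg at hc
        exact hs.2 (Finset.eq_empty_of_forall_notMem hc)
      obtain ⟨k, hk⟩ : ∃ k, k ∉ s := by
        by_contra hc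
        push_neg at hc
        exact hs.1 (Finset.eq_univ_of_forall hc)
      refine mixed_zero h _ j k (fun hjk => hk (hjk ▸ hj)) ?_ ?_
      · simp [Finset.piecewise_eq_of_mem _ _ _ hj]
      · simp [Finset.piecewise_eq_of_notMem _ _ _ hk])]
  congr 1
  · simp
  · simp

end Aux

/-- If `A` and `B` are commutative `R`-algebras with `A ⊗_R B = 0`, then for
every `n ≥ 1` the `n`-fold tensor power of the product ring `A × B` over `R` splits as
`(A × B)^{⊗_R n} ≅ A^{⊗_R n} × B^{⊗_R n}` (all mixed terms in the expansion vanish). -/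
theorem stmt17 (R A B : Type) [CommRing R] [CommRing A] [CommRing B]
    [Algebra R A] [Algebra R B] (h : Subsingleton (A ⊗[R] B)) (n : ℕ) (hn : 1 ≤ n) :
    Nonempty ((⨂[R] _ : Fin n, (A × B)) ≃+*
      ((⨂[R] _ : Fin n, A) × (⨂[R] _ : Fin n, B))) := by
  haveI : NeZero n := ⟨by omega⟩
  refine ⟨{
    toFun := fwd R A B n
    invFun := fun p => bwdA R A B n p.1 + bwdB R A B n p.2
    map_mul' := map_mul (fwd R A B n)
    map_add' := map_add (fwd R A B n)
    left_inv := ?_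
    right_inv := ?_ }⟩
  · -- ψ ∘ φ = id
    have : ((bwdA R A B n).comp (LinearMap.fst R _ _) + (bwdB R A B n).comp
        (LinearMap.snd R _ _)).comp (fwd R A B n).toLinearMap = LinearMap.id := by
      apply PiTensorProduct.ext
      apply MultilinearMap.ext
      intro x
      simp only [LinearMap.compMultilinearMap_apply, LinearMap.comp_apply, LinearMap.add_apply,
        LinearMap.id_apply, AlgHom.toLinearMap_apply]
      rw [show (fwd R A B n) (PiTensorProduct.tprod R x) = fwdML R A B n x by
        simp [fwd, liftAlgHom_apply]]
      simp only [fwdML_apply, LinearMap.fst_apply, LinearMap.snd_apply, bwdA_tprod, bwdB_tprod]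
      exact (split h hn x).symm
    intro t
    exact congrArg (fun f => f t) (congrArg DFunLike.coe this) |>.trans rfl
  · -- φ ∘ ψ = id
    rintro ⟨x, y⟩
    have hA : ∀ x, fwd R A B n (bwdA R A B n x) = (x, 0) := by
      have : (fwd R A B n).toLinearMap.comp (bwdA R A B n) =
          (LinearMap.inl R _ _) := by
        apply PiTensorProduct.ext
        apply MultilinearMap.ext
        intro a
        simp only [LinearMap.compMultilinearMap_apply, LinearMap.comp_apply, bwdA_tprod,
          AlgHom.toLinearMap_apply, LinearMap.inl_apply]
        rw [show (fwd R A B n) (PiTensorProduct.tprod R (fun i => ((a i, 0) : A × B))) = fwdML R A B n (fun i => ((a i, 0) : A × B)) by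
          simp [fwd, liftAlgHom_apply]]
        simp only [fwdML_apply, Prod.ext_iff]
        refine ⟨trivial, ?_⟩
        have : (fun i : Fin n => ((a i, (0:B)) : A × B).2) = 0 := by funext i; rfl
        rw [this, MultilinearMap.map_zero]
      intro x; exact congrArg (fun f => f x) (congrArg DFunLike.coe this)
    have hB : ∀ y, fwd R A B n (bwdB R A B n y) = (0, y) := by
      have : (fwd R A B n).toLinearMap.comp (bwdB R A B n) =
          (LinearMap.inr R _ _) := by
        apply PiTensorProduct.ext
        apply MultilinearMap.ext
        intro b
        simp only [LinearMap.compMultilinearMap_apply, LinearMap.comp_apply, bwdB_tprod,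
          AlgHom.toLinearMap_apply, LinearMap.inr_apply]
        rw [show (fwd R A B n) (PiTensorProduct.tprod R (fun i => ((0, b i) : A × B))) = fwdML R A B n (fun i => ((0, b i) : A × B)) by
          simp [fwd, liftAlgHom_apply]]
        simp only [fwdML_apply, Prod.ext_iff]
        refine ⟨?_, trivial⟩
        have : (fun i : Fin n => (((0:A), b i) : A × B).1) = 0 := by funext i; rfl
        rw [this, MultilinearMap.map_zero]
      intro y; exact congrArg (fun f => f y) (congrArg DFunLike.coe this)
    simp [map_add, hA, hB, Prod.ext_iff]
end
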